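/- arXiv:2210.13065 — 5 statements merged into one kernel-verified Lean document; each statement's English description precedes it below -/
import Mathlib

section
/- Let (D,v) be a nonnegative monotonic cooperative game with v(D) > 0. For ε > 0 define the positive game v_ε by v_ε(A) = ε if v(A) = 0 and v_ε(A) = v(A) otherwise. Then for every player i ∈ D, the proportional value PV_i(D, v_ε) converges, as ε → 0⁺, to the extended proportional value PV⁰_i of (D,v). -/
open Finset

/-- The ratio potential `R(A, v)` of a cooperative game, defined recursively by
`R(∅, v) = 1` and `R(A, v) = v(A) · (Σ_{j∈A} R(A\{j}, v)⁻¹)⁻¹` for nonempty `A`. -/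
noncomputable def ratioPot {d : ℕ} (v : Finset (Fin d) → ℝ) (A : Finset (Fin d)) : ℝ :=
  if A = ∅ then 1
  else v A * (∑ j ∈ A.attach, (ratioPot v (A.erase j.1))⁻¹)⁻¹
termination_by A.card
decreasing_by exact Finset.card_erase_lt_of_mem j.2

-- The coalitions with null value.
open scoped Classical in
noncomputable def nullCoalitions {d : ℕ} (v : Finset (Fin d) → ℝ) : Finset (Finset (Fin d)) :=
  Finset.univ.filter (fun A => v A = 0)

/-- `k_max`: the cardinal of the largest null coalition. -/
noncomputable def kmax {d : ℕ} (v : Finset (Fin d) → ℝ) : ℕ :=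
  (nullCoalitions v).sup Finset.card

-- `𝒦`: the set of null coalitions of cardinal `k_max`.
open scoped Classical in
noncomputable def maxNullCoalitions {d : ℕ} (v : Finset (Fin d) → ℝ) :
    Finset (Finset (Fin d)) :=
  (nullCoalitions v).filter (fun A => A.card = kmax v)

-- `𝒦_{-i}`: the set of null coalitions of `D\{i}` of cardinal `k_max`.
open scoped Classical in
noncomputable def maxNullCoalitionsAvoiding {d : ℕ} (v : Finset (Fin d) → ℝ) (i : Fin d) :
    Finset (Finset (Fin d)) :=
  (maxNullCoalitions v).filter (fun A => i ∉ A)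

-- `PV⁰_i`: the extended proportional value of player `i` for a nonnegative monotonic
-- cooperative game, where `v_A(B) = v(A ∪ B)`.
open scoped Classical in
noncomputable def PV0 {d : ℕ} (v : Finset (Fin d) → ℝ) (i : Fin d) : ℝ :=
  if ∀ A ∈ maxNullCoalitions v, i ∈ A then 0
  else
    (∑ A ∈ maxNullCoalitionsAvoiding v i,
        (ratioPot (fun B => v (A ∪ B)) ((Finset.univ.erase i) \ A))⁻¹) /
    (∑ A ∈ maxNullCoalitions v, (ratioPot (fun B => v (A ∪ B)) (Finset.univ \ A))⁻¹)

/-! As `ε → 0⁺`, `R(A, v_ε) ~ ε ^ m(A) / Λ(A)`, where `m(A)` is the size of a largest null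
subcoalition of `A` and `Λ(A) = m(A)! · Σ_T R(A \ T, v_T)⁻¹`, the sum running over the null
subcoalitions `T` of size `m(A)`. This follows by strong induction on `A` from the recursion
defining `R`: on a null coalition `v_ε` is constantly `ε`, so `R(A, v_ε) = ε ^ |A| / |A|!`;
otherwise only the players `j` with `m(A \ {j}) = m(A)` contribute to the leading order, and
regrouping their contributions by `T` recovers the recursion of the subgames `v_T` on `A \ T`.
Hence `PV_i(D, v_ε) = R(D, v_ε) / R(D \ {i}, v_ε)` tends to
`0 ^ (m(D) - m(D \ {i})) · Λ(D \ {i}) / Λ(D)`, which is `PV⁰_i`: the power vanishes exactly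
when `i` lies in every maximal null coalition. -/

open Filter Topology
open scoped Nat

section RatioPotential

variable {d : ℕ}

lemma ratioPot_empty (v : Finset (Fin d) → ℝ) : ratioPot v ∅ = 1 := by
  rw [ratioPot, if_pos rfl]

lemma ratioPot_of_nonempty (v : Finset (Fin d) → ℝ) {A : Finset (Fin d)} (hA : A.Nonempty) :
    ratioPot v A = v A * (∑ j ∈ A, (ratioPot v (A.erase j))⁻¹)⁻¹ := by
  rw [ratioPot, if_neg hA.ne_empty, sum_attach A fun j => (ratioPot v (A.erase j))⁻¹]

lemma sum_inv_ratioPot_erase {v : Finset (Fin d) → ℝ} {A : Finset (Fin d)} (hA : A.Nonempty)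
    (hvA : v A ≠ 0) : ∑ j ∈ A, (ratioPot v (A.erase j))⁻¹ = v A * (ratioPot v A)⁻¹ := by
  rw [ratioPot_of_nonempty v hA, mul_inv, inv_inv, mul_inv_cancel_left₀ hvA]

lemma ratioPot_pos {v : Finset (Fin d) → ℝ} {A : Finset (Fin d)}
    (hv : ∀ B ⊆ A, B.Nonempty → 0 < v B) : 0 < ratioPot v A := by
  induction A using Finset.strongInduction with
  | _ A ih =>
    obtain rfl | hA := A.eq_empty_or_nonempty
    · simp [ratioPot_empty]
    rw [ratioPot_of_nonempty v hA]
    refine mul_pos (hv A subset_rfl hA) (inv_pos.2 (sum_pos (fun j hj => inv_pos.2 ?_) hA))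
    exact ih _ (erase_ssubset hj) fun B hB => hv B (hB.trans (erase_subset j A))

lemma ratioPot_of_forall_eq {v : Finset (Fin d) → ℝ} {c : ℝ} {A : Finset (Fin d)}
    (hv : ∀ B ⊆ A, B.Nonempty → v B = c) : ratioPot v A = c ^ #A / (#A)! := by
  induction A using Finset.strongInduction with
  | _ A ih =>
    obtain rfl | hA := A.eq_empty_or_nonempty
    · simp [ratioPot_empty]
    obtain ⟨n, hn⟩ : ∃ n, #A = n + 1 := Nat.exists_eq_succ_of_ne_zero hA.card_pos.ne'
    have herase : ∀ j ∈ A, ratioPot v (A.erase j) = c ^ n / n ! := fun j hj => by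
      rw [ih _ (erase_ssubset hj) fun B hB => hv B (hB.trans (erase_subset j A)),
        card_erase_of_mem hj, hn, Nat.add_sub_cancel]
    rw [ratioPot_of_nonempty v hA, hv A subset_rfl hA, sum_congr rfl fun j hj => by
      rw [herase j hj], sum_const, hn, nsmul_eq_mul, mul_inv, inv_inv, Nat.factorial_succ,
      pow_succ, Nat.cast_mul, ← div_div]
    ring

end RatioPotential

section NullCoalitions

variable {d : ℕ} (v : Finset (Fin d) → ℝ)

open scoped Classical in
noncomputable def nullSubsets (A : Finset (Fin d)) : Finset (Finset (Fin d)) :=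
  A.powerset.filter fun T => v T = 0

noncomputable def maxNullCard (A : Finset (Fin d)) : ℕ := (nullSubsets v A).sup card

noncomputable def maxNullSubsets (A : Finset (Fin d)) : Finset (Finset (Fin d)) :=
  (nullSubsets v A).filter fun T => #T = maxNullCard v A

/-- `Λ(A)`, the limit of `ε ^ m(A) / R(A, v_ε)` as `ε → 0⁺`. -/
noncomputable def leadingCoeff (A : Finset (Fin d)) : ℝ :=
  (maxNullCard v A)! * ∑ T ∈ maxNullSubsets v A, (ratioPot (fun B => v (T ∪ B)) (A \ T))⁻¹

noncomputable def perturb (ε : ℝ) (A : Finset (Fin d)) : ℝ := if v A = 0 then ε else v A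

variable {v} {A T : Finset (Fin d)}

lemma mem_nullSubsets : T ∈ nullSubsets v A ↔ T ⊆ A ∧ v T = 0 := by
  classical simp [nullSubsets]

lemma mem_maxNullSubsets :
    T ∈ maxNullSubsets v A ↔ (T ⊆ A ∧ v T = 0) ∧ #T = maxNullCard v A := by
  rw [maxNullSubsets, mem_filter, mem_nullSubsets]

lemma card_le_maxNullCard (hT : T ⊆ A) (hT0 : v T = 0) : #T ≤ maxNullCard v A :=
  le_sup (mem_nullSubsets.2 ⟨hT, hT0⟩)

lemma maxNullCard_mono {B : Finset (Fin d)} (h : B ⊆ A) : maxNullCard v B ≤ maxNullCard v A :=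
  Finset.sup_le fun _ hT =>
    card_le_maxNullCard ((mem_nullSubsets.1 hT).1.trans h) (mem_nullSubsets.1 hT).2

lemma maxNullSubsets_nonempty (hv0 : v ∅ = 0) (A : Finset (Fin d)) :
    (maxNullSubsets v A).Nonempty := by
  obtain ⟨T, hT, hcard⟩ := exists_mem_eq_sup (nullSubsets v A)
    ⟨∅, mem_nullSubsets.2 ⟨empty_subset A, hv0⟩⟩ card
  exact ⟨T, mem_maxNullSubsets.2 ⟨mem_nullSubsets.1 hT, hcard.symm⟩⟩

lemma maxNullSubsets_of_null (hA : v A = 0) :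
    maxNullCard v A = #A ∧ maxNullSubsets v A = {A} := by
  have hm : maxNullCard v A = #A :=
    le_antisymm (Finset.sup_le fun T hT => card_le_card (mem_nullSubsets.1 hT).1)
      (card_le_maxNullCard subset_rfl hA)
  refine ⟨hm, Finset.ext fun T => ?_⟩
  rw [mem_maxNullSubsets, mem_singleton, hm]
  constructor
  · exact fun ⟨⟨hTA, _⟩, hcard⟩ => eq_of_subset_of_card_le hTA hcard.ge
  · rintro rfl
    exact ⟨⟨subset_rfl, hA⟩, rfl⟩

lemma maxNullSubsets_erase {j : Fin d} (h : maxNullCard v (A.erase j) = maxNullCard v A) :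
    maxNullSubsets v (A.erase j) = (maxNullSubsets v A).filter (j ∉ ·) := by
  ext T
  simp only [mem_filter, mem_maxNullSubsets, subset_erase, h]
  tauto

lemma pos_of_mem_maxNullSubsets (hnonneg : ∀ A, 0 ≤ v A) (hT : T ∈ maxNullSubsets v A)
    {C : Finset (Fin d)} (hC : C ⊆ A \ T) (hC0 : C.Nonempty) : 0 < v (T ∪ C) := by
  obtain ⟨⟨hTA, -⟩, hTcard⟩ := mem_maxNullSubsets.1 hT
  refine (hnonneg _).lt_of_ne' fun h0 => ?_
  have hdisj : Disjoint T C := disjoint_of_subset_right hC disjoint_sdiff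
  have hle := card_le_maxNullCard (union_subset hTA (hC.trans sdiff_subset)) h0
  rw [card_union_of_disjoint hdisj, hTcard] at hle
  exact hC0.card_pos.ne' (by omega)

lemma leadingCoeff_pos (hv0 : v ∅ = 0) (hnonneg : ∀ A, 0 ≤ v A) (A : Finset (Fin d)) :
    0 < leadingCoeff v A := by
  refine mul_pos (by positivity) (sum_pos (fun T hT => inv_pos.2 (ratioPot_pos ?_))
    (maxNullSubsets_nonempty hv0 A))
  exact fun C hC hC0 => pos_of_mem_maxNullSubsets hnonneg hT hC hC0

lemma leadingCoeff_of_null (hA : v A = 0) : leadingCoeff v A = (#A)! := by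
  obtain ⟨hm, hK⟩ := maxNullSubsets_of_null hA
  simp [leadingCoeff, hm, hK, ratioPot_empty]

/-- The players `j` with `m(A \ {j}) < m(A)` belong to every maximal null `T`, which is why the
factor `0 ^ (m(A) - m(A \ {j}))` may be replaced by restricting the sum to `T ∌ j`. -/
lemma zero_pow_mul_leadingCoeff_erase (A : Finset (Fin d)) (j : Fin d) :
    0 ^ (maxNullCard v A - maxNullCard v (A.erase j)) * leadingCoeff v (A.erase j) =
      (maxNullCard v A)! * ∑ T ∈ (maxNullSubsets v A).filter (j ∉ ·),
        (ratioPot (fun B => v (T ∪ B)) (A.erase j \ T))⁻¹ := by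
  obtain h | h := (maxNullCard_mono (v := v) (erase_subset j A)).eq_or_lt
  · rw [h, Nat.sub_self, pow_zero, one_mul, leadingCoeff, maxNullSubsets_erase h, h]
  · have hempty : (maxNullSubsets v A).filter (j ∉ ·) = ∅ := by
      refine filter_false_of_mem fun T hT hjT => ?_
      obtain ⟨⟨hTA, hT0⟩, hTcard⟩ := mem_maxNullSubsets.1 hT
      have := card_le_maxNullCard (subset_erase.2 ⟨hTA, hjT⟩) hT0
      omega
    rw [hempty, sum_empty, mul_zero, zero_pow (by omega), zero_mul]

lemma sum_zero_pow_mul_leadingCoeff_erase (hA : v A ≠ 0) :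
    ∑ j ∈ A, 0 ^ (maxNullCard v A - maxNullCard v (A.erase j)) * leadingCoeff v (A.erase j) =
      v A * leadingCoeff v A := by
  have hregroup : ∀ T ∈ maxNullSubsets v A,
      ∑ j ∈ A, (if j ∉ T then (ratioPot (fun B => v (T ∪ B)) (A.erase j \ T))⁻¹ else 0) =
        v A * (ratioPot (fun B => v (T ∪ B)) (A \ T))⁻¹ := by
    intro T hT
    obtain ⟨⟨hTA, hT0⟩, -⟩ := mem_maxNullSubsets.1 hT
    have hne : (A \ T).Nonempty :=
      sdiff_nonempty.2 fun hAT => hA (subset_antisymm hAT hTA ▸ hT0)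
    rw [← sum_filter, ← sdiff_eq_filter]
    simp_rw [erase_sdiff_comm]
    rw [sum_inv_ratioPot_erase hne (by rwa [union_sdiff_of_subset hTA]),
      union_sdiff_of_subset hTA]
  simp_rw [zero_pow_mul_leadingCoeff_erase, ← mul_sum, sum_filter]
  rw [sum_comm, sum_congr rfl hregroup, leadingCoeff, ← mul_sum]
  ring

end NullCoalitions

section Limit

variable {d : ℕ} {v : Finset (Fin d) → ℝ}

lemma tendsto_pow_nhdsGT_zero (k : ℕ) : Tendsto (fun ε : ℝ => ε ^ k) (𝓝[>] 0) (𝓝 (0 ^ k)) :=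
  ((continuous_pow k).tendsto 0).mono_left nhdsWithin_le_nhds

theorem tendsto_pow_div_ratioPot_perturb (hv0 : v ∅ = 0) (hnonneg : ∀ A, 0 ≤ v A)
    (hmono : ∀ T A, T ⊆ A → v T ≤ v A) (A : Finset (Fin d)) :
    Tendsto (fun ε => ε ^ maxNullCard v A / ratioPot (perturb v ε) A) (𝓝[>] 0)
      (𝓝 (leadingCoeff v A)) := by
  induction A using Finset.strongInduction with
  | _ A ih =>
  by_cases hA : v A = 0
  · have hR (ε : ℝ) : ratioPot (perturb v ε) A = ε ^ #A / (#A)! :=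
      ratioPot_of_forall_eq fun B hB _ =>
        if_pos (le_antisymm (hA ▸ hmono B A hB) (hnonneg B))
    rw [leadingCoeff_of_null hA, (maxNullSubsets_of_null hA).1]
    refine tendsto_const_nhds.congr' ?_
    filter_upwards [self_mem_nhdsWithin] with ε (hε : 0 < ε)
    rw [hR, div_div_cancel₀ (pow_ne_zero _ hε.ne')]
  have hAne : A.Nonempty := nonempty_iff_ne_empty.2 (by rintro rfl; exact hA hv0)
  -- `ε ^ m(A) / R(A, v_ε) = v(A)⁻¹ · Σ_j ε ^ (m(A) - m(A∖j)) · (ε ^ m(A∖j) / R(A∖j, v_ε))`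
  have hlim := (tendsto_finsetSum A fun j hj =>
      (tendsto_pow_nhdsGT_zero (maxNullCard v A - maxNullCard v (A.erase j))).mul
        (ih _ (erase_ssubset hj))).const_mul (v A)⁻¹
  rw [sum_zero_pow_mul_leadingCoeff_erase hA, inv_mul_cancel_left₀ hA] at hlim
  refine hlim.congr fun ε => ?_
  simp_rw [← mul_div_assoc, pow_sub_mul_pow ε (maxNullCard_mono (erase_subset _ A)),
    div_eq_mul_inv, ← mul_sum]
  rw [sum_inv_ratioPot_erase hAne (by rwa [perturb, if_neg hA]), perturb, if_neg hA,
    mul_left_comm, inv_mul_cancel_left₀ hA]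

end Limit

lemma maxNullSubsets_univ {d : ℕ} (v : Finset (Fin d) → ℝ) :
    maxNullSubsets v univ = maxNullCoalitions v := by
  have hnull : nullSubsets v univ = nullCoalitions v := by
    ext T
    simp [mem_nullSubsets, nullCoalitions]
  rw [maxNullSubsets, maxNullCoalitions, maxNullCard, hnull, kmax]

lemma PV0_eq_zero_pow_mul_div {d : ℕ} (v : Finset (Fin d) → ℝ) (i : Fin d) :
    PV0 v i = 0 ^ (maxNullCard v univ - maxNullCard v (univ.erase i)) *
      leadingCoeff v (univ.erase i) / leadingCoeff v univ := by
  rw [zero_pow_mul_leadingCoeff_erase, leadingCoeff, mul_div_mul_left _ _ (by positivity), PV0,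
    maxNullSubsets_univ]
  split_ifs with h
  · rw [filter_false_of_mem fun T hT => not_not.2 (h T hT), sum_empty, zero_div]
  · rfl

theorem pv_eps_tendsto_pv0_general {d : ℕ} (v : Finset (Fin d) → ℝ) (hv0 : v ∅ = 0)
    (hnonneg : ∀ A : Finset (Fin d), 0 ≤ v A)
    (hmono : ∀ T A : Finset (Fin d), T ⊆ A → v T ≤ v A)
    (i : Fin d) :
    Filter.Tendsto
      (fun ε : ℝ =>
        ratioPot (fun A => if v A = 0 then ε else v A) Finset.univ /
          ratioPot (fun A => if v A = 0 then ε else v A) (Finset.univ.erase i))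
      (nhdsWithin 0 (Set.Ioi 0)) (nhds (PV0 v i)) := by
  have hlim := ((tendsto_pow_nhdsGT_zero
      (maxNullCard v univ - maxNullCard v (univ.erase i))).mul
      (tendsto_pow_div_ratioPot_perturb hv0 hnonneg hmono (univ.erase i))).div
    (tendsto_pow_div_ratioPot_perturb hv0 hnonneg hmono univ)
    (leadingCoeff_pos hv0 hnonneg univ).ne'
  rw [PV0_eq_zero_pow_mul_div]
  refine hlim.congr' ?_
  filter_upwards [self_mem_nhdsWithin] with ε (hε : 0 < ε)
  simp only [Pi.div_apply]
  rw [← mul_div_assoc, pow_sub_mul_pow ε (maxNullCard_mono (erase_subset i univ)),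
    div_div_div_cancel_left' _ _ (pow_ne_zero _ hε.ne')]
  rfl

/-- For a nonnegative monotonic cooperative game `(D, v)` with `v(D) > 0`, the
proportional values of the positive games `v_ε` (where null values are replaced by `ε > 0`)
converge, as `ε → 0⁺`, to the extended proportional values `PV⁰` of `(D, v)`. -/
theorem pv_eps_tendsto_pv0 {d : ℕ} (v : Finset (Fin d) → ℝ) (hv0 : v ∅ = 0)
    (hnonneg : ∀ A : Finset (Fin d), 0 ≤ v A)
    (hmono : ∀ T A : Finset (Fin d), T ⊆ A → v T ≤ v A)
    (hD : 0 < v Finset.univ) (i : Fin d) :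
    Filter.Tendsto
      (fun ε : ℝ =>
        ratioPot (fun A => if v A = 0 then ε else v A) Finset.univ /
          ratioPot (fun A => if v A = 0 then ε else v A) (Finset.univ.erase i))
      (nhdsWithin 0 (Set.Ioi 0)) (nhds (PV0 v i)) :=
  pv_eps_tendsto_pv0_general v hv0 hnonneg hmono i
end

section
/- Let (D,v) be a positive cooperative game. Then the proportional values are the random order model allocation associated with the probability mass function p(π) = L(π)/Σ_{σ∈S_D} L(σ) on the set S_D of permutations of D, where L(π) = (Π_{j=1}^{d} v(C_j(π)))^{-1}: for every i ∈ D, PV_i(D,v) = Σ_{π∈S_D} p(π)·(v(C_{π(i)}(π)) − v(C_{π(i)−1}(π))). -/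
open Finset

/-- `C_j(σ)`: the coalition made of the first `j` players in the ordering `σ` of `D`
(the player in position `k` of the ordering `σ` is `σ k`, positions being `0`-indexed;
the `1`-indexed position of player `i` is hence `(σ.symm i : ℕ) + 1`). -/
def permCoal {d : ℕ} (σ : Equiv.Perm (Fin d)) (j : ℕ) : Finset (Fin d) :=
  (Finset.univ.filter (fun k : Fin d => (k : ℕ) < j)).image σ

/-- `L(π) = (Π_{j=1}^{d} v(C_j(π)))⁻¹`. -/
noncomputable def Lweight {d : ℕ} (v : Finset (Fin d) → ℝ) (σ : Equiv.Perm (Fin d)) : ℝ :=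
  (∏ j ∈ Finset.range d, v (permCoal σ (j + 1)))⁻¹

/-!
Extend the weight `L` to orderings of an arbitrary coalition `A`. Splitting an ordering of `A`
at its last player `j` gives `∑_{orderings of A} L = v(A)⁻¹ ∑_{j ∈ A} ∑_{orderings of A \ {j}} L`,
which is the recursion defining `R(A)⁻¹`; hence `∑_{orderings of A} L = R(A)⁻¹`. In the same way,
by induction on `A ∋ i`, the `L`-weighted marginal contributions of `i` add up to
`R(A \ {i})⁻¹`: orderings ending in `i` give `v(A)⁻¹ (v(A) - v(A \ {i})) R(A \ {i})⁻¹`, the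
others give `v(A)⁻¹ ∑_{j ≠ i} R(A \ {i, j})⁻¹ = v(A)⁻¹ v(A \ {i}) R(A \ {i})⁻¹`. The quotient of
the two identities for `A = D` is `R(D) / R(D \ {i})`.
-/

namespace RandomOrder

variable {α : Type*} [DecidableEq α]

noncomputable def orderings (A : Finset α) : Finset (List α) :=
  A.toList.permutations.toFinset

theorem mem_orderings {A : Finset α} {l : List α} :
    l ∈ orderings A ↔ l.Nodup ∧ l.toFinset = A := by
  rw [orderings, List.mem_toFinset, List.mem_permutations]
  refine ⟨fun h => ⟨h.nodup_iff.2 A.nodup_toList, ?_⟩, fun ⟨hl, hA⟩ => ?_⟩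
  · ext x
    rw [List.mem_toFinset, h.mem_iff, Finset.mem_toList]
  · exact List.perm_of_nodup_nodup_toFinset_eq hl A.nodup_toList
      (by rw [hA, Finset.toList_toFinset])

theorem orderings_empty : orderings (∅ : Finset α) = {[]} := by
  ext l
  simp only [mem_orderings, List.toFinset_eq_empty_iff, Finset.mem_singleton]
  exact ⟨And.right, fun h => ⟨h ▸ List.nodup_nil, h⟩⟩

theorem toFinset_append_singleton (l : List α) (j : α) :
    (l ++ [j]).toFinset = insert j l.toFinset := by
  simp only [List.toFinset_append, List.toFinset_cons, List.toFinset_nil, insert_empty_eq,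
    Finset.union_singleton]

theorem mem_orderings_erase_iff {A : Finset α} {j : α} (hj : j ∈ A) {l : List α} :
    l ∈ orderings (A.erase j) ↔ l ++ [j] ∈ orderings A := by
  simp only [mem_orderings, List.nodup_append, List.nodup_singleton, true_and,
    toFinset_append_singleton, List.mem_singleton, forall_eq]
  constructor
  · rintro ⟨hl, hlA⟩
    refine ⟨⟨hl, fun a ha hja => ?_⟩, by rw [hlA, Finset.insert_erase hj]⟩
    have := hlA ▸ List.mem_toFinset.2 ha
    simp [hja] at this
  · rintro ⟨⟨hl, hjl⟩, hlA⟩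
    refine ⟨hl, ?_⟩
    rw [← hlA, Finset.erase_insert (List.mem_toFinset.not.2 fun h => hjl j h rfl)]

theorem sum_orderings_eq_sum_sum_append {M : Type*} [AddCommMonoid M] {A : Finset α}
    (hA : A.Nonempty) (F : List α → M) :
    ∑ l ∈ orderings A, F l = ∑ j ∈ A, ∑ l ∈ orderings (A.erase j), F (l ++ [j]) := by
  have hne : ∀ l ∈ orderings A, l ≠ [] := by
    rintro l hl rfl
    exact hA.ne_empty (mem_orderings.1 hl).2.symm
  rw [Finset.sum_sigma']
  refine (Finset.sum_bij' (fun p _ => p.2 ++ [p.1])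
    (fun l hl => ⟨l.getLast (hne l hl), l.dropLast⟩) ?_ ?_ ?_ ?_ fun _ _ => rfl).symm
  · rintro ⟨j, l⟩ hp
    obtain ⟨hj, hl⟩ := Finset.mem_sigma.1 hp
    exact (mem_orderings_erase_iff hj).1 hl
  · intro l hl
    have hlast : l.getLast (hne l hl) ∈ A :=
      (mem_orderings.1 hl).2 ▸ List.mem_toFinset.2 (List.getLast_mem _)
    rw [← List.dropLast_append_getLast (hne l hl)] at hl
    exact Finset.mem_sigma.2 ⟨hlast, (mem_orderings_erase_iff hlast).2 hl⟩
  · rintro ⟨j, l⟩ _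
    simp
  · intro l hl
    exact List.dropLast_append_getLast (hne l hl)

section Weights

variable {K : Type*} [Field K] (v : Finset α → K)

/-- `L(π) = (prefixProd v π)⁻¹`, here for orderings `l` of an arbitrary coalition. -/
noncomputable def prefixProd (l : List α) : K :=
  ∏ k ∈ Finset.range l.length, v (l.take (k + 1)).toFinset

/-- The marginal contribution `v(C_{π(i)}) - v(C_{π(i)-1})` of `i` in the ordering `l`. -/
noncomputable def marginal (i : α) (l : List α) : K :=
  v (l.take (l.idxOf i + 1)).toFinset - v (l.take (l.idxOf i)).toFinset

theorem prefixProd_append_singleton (l : List α) (j : α) :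
    prefixProd v (l ++ [j]) = prefixProd v l * v (l ++ [j]).toFinset := by
  rw [prefixProd, List.length_append, List.length_singleton, Finset.prod_range_succ,
    List.take_of_length_le (by simp)]
  congr 1
  refine Finset.prod_congr rfl fun k hk => ?_
  rw [List.take_append_of_le_length (by simpa using hk)]

theorem marginal_append_singleton_of_mem {i : α} {l : List α} (hi : i ∈ l) (j : α) :
    marginal v i (l ++ [j]) = marginal v i l := by
  have hlt : l.idxOf i < l.length := List.idxOf_lt_length_iff.2 hi
  rw [marginal, marginal, List.idxOf_append_of_mem hi, List.take_append_of_le_length hlt,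
    List.take_append_of_le_length hlt.le]

theorem marginal_append_singleton_self {i : α} {l : List α} (hi : i ∉ l) :
    marginal v i (l ++ [i]) = v (l ++ [i]).toFinset - v l.toFinset := by
  have hidx : (l ++ [i]).idxOf i = l.length := by simp [List.idxOf_append_of_notMem hi]
  rw [marginal, hidx, List.take_of_length_le (by simp), List.take_left]

theorem sum_orderings_inv_prefixProd_mul {A : Finset α} (hA : A.Nonempty) (F : List α → K) :
    ∑ l ∈ orderings A, (prefixProd v l)⁻¹ * F l =
      (v A)⁻¹ * ∑ j ∈ A, ∑ l ∈ orderings (A.erase j), (prefixProd v l)⁻¹ * F (l ++ [j]) := by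
  rw [sum_orderings_eq_sum_sum_append hA, Finset.mul_sum]
  refine Finset.sum_congr rfl fun j hj => ?_
  rw [Finset.mul_sum]
  refine Finset.sum_congr rfl fun l hl => ?_
  rw [prefixProd_append_singleton, (mem_orderings.1 ((mem_orderings_erase_iff hj).1 hl)).2,
    mul_inv]
  ring

end Weights

section RatioPotential

variable {d : ℕ} (v : Finset (Fin d) → ℝ)

theorem inv_ratioPot_of_nonempty {A : Finset (Fin d)} (hA : A.Nonempty) :
    (ratioPot v A)⁻¹ = (v A)⁻¹ * ∑ j ∈ A, (ratioPot v (A.erase j))⁻¹ := by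
  rw [ratioPot, if_neg hA.ne_empty, mul_inv, inv_inv,
    Finset.sum_attach A fun j => (ratioPot v (A.erase j))⁻¹]

theorem sum_inv_ratioPot_erase (hv0 : v ∅ = 0) {B : Finset (Fin d)}
    (hB : B.Nonempty → v B ≠ 0) :
    ∑ j ∈ B, (ratioPot v (B.erase j))⁻¹ = v B * (ratioPot v B)⁻¹ := by
  rcases B.eq_empty_or_nonempty with rfl | hne
  · simp [hv0]
  · rw [inv_ratioPot_of_nonempty v hne, mul_inv_cancel_left₀ (hB hne)]

theorem sum_orderings_inv_prefixProd (A : Finset (Fin d)) :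
    ∑ l ∈ orderings A, (prefixProd v l)⁻¹ = (ratioPot v A)⁻¹ := by
  induction A using Finset.strongInduction with
  | H A ih =>
    rcases A.eq_empty_or_nonempty with rfl | hA
    · simp [orderings_empty, prefixProd, ratioPot]
    · rw [inv_ratioPot_of_nonempty v hA,
        ← Finset.sum_congr rfl fun j hj => ih _ (Finset.erase_ssubset hj)]
      simpa using sum_orderings_inv_prefixProd_mul v hA fun _ => 1

theorem sum_orderings_inv_prefixProd_mul_marginal (hv0 : v ∅ = 0)
    (hv : ∀ A : Finset (Fin d), A.Nonempty → v A ≠ 0) {A : Finset (Fin d)} {i : Fin d}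
    (hi : i ∈ A) :
    ∑ l ∈ orderings A, (prefixProd v l)⁻¹ * marginal v i l = (ratioPot v (A.erase i))⁻¹ := by
  induction A using Finset.strongInduction with
  | H A ih =>
    have last_eq_i : ∑ l ∈ orderings (A.erase i), (prefixProd v l)⁻¹ * marginal v i (l ++ [i]) =
        (v A - v (A.erase i)) * (ratioPot v (A.erase i))⁻¹ := by
      rw [← sum_orderings_inv_prefixProd, Finset.mul_sum]
      refine Finset.sum_congr rfl fun l hl => ?_
      have hlA := (mem_orderings.1 hl).2
      have hil : i ∉ l := fun h => Finset.notMem_erase i A (hlA ▸ List.mem_toFinset.2 h)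
      rw [marginal_append_singleton_self v hil,
        toFinset_append_singleton, hlA, Finset.insert_erase hi, mul_comm]
    have last_ne_i : ∀ j ∈ A.erase i, ∑ l ∈ orderings (A.erase j),
        (prefixProd v l)⁻¹ * marginal v i (l ++ [j]) = (ratioPot v ((A.erase i).erase j))⁻¹ := by
      intro j hj
      have hiA : i ∈ A.erase j := Finset.mem_erase.2 ⟨(Finset.ne_of_mem_erase hj).symm, hi⟩
      rw [Finset.erase_right_comm, ← ih _ (Finset.erase_ssubset (Finset.mem_of_mem_erase hj)) hiA]
      refine Finset.sum_congr rfl fun l hl => ?_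
      rw [marginal_append_singleton_of_mem v (List.mem_toFinset.1 ((mem_orderings.1 hl).2 ▸ hiA))]
    have hA : A.Nonempty := ⟨i, hi⟩
    rw [sum_orderings_inv_prefixProd_mul v hA, ← Finset.add_sum_erase _ _ hi, last_eq_i,
      Finset.sum_congr rfl last_ne_i, sum_inv_ratioPot_erase v hv0 (hv _), ← add_mul,
      sub_add_cancel, inv_mul_cancel_left₀ (hv A hA)]

end RatioPotential

section Permutations

variable {d : ℕ}

theorem permCoal_eq_toFinset_take_ofFn (σ : Equiv.Perm (Fin d)) (j : ℕ) :
    permCoal σ j = ((List.ofFn σ).take j).toFinset := by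
  ext x
  simp only [permCoal, Finset.mem_image, Finset.mem_filter, Finset.mem_univ, true_and,
    List.mem_toFinset, List.mem_take_iff_getElem, List.getElem_ofFn, List.length_ofFn]
  constructor
  · rintro ⟨k, hk, rfl⟩
    exact ⟨k, lt_min hk k.2, rfl⟩
  · rintro ⟨k, hk, rfl⟩
    exact ⟨⟨k, (lt_min_iff.1 hk).2⟩, (lt_min_iff.1 hk).1, rfl⟩

theorem idxOf_ofFn_perm (σ : Equiv.Perm (Fin d)) (i : Fin d) :
    (List.ofFn σ).idxOf i = σ.symm i := by
  simpa using (List.nodup_ofFn.2 σ.injective).idxOf_getElem (σ.symm i) (by simp)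

theorem ofFn_perm_mem_orderings_univ (σ : Equiv.Perm (Fin d)) :
    List.ofFn σ ∈ orderings Finset.univ := by
  refine mem_orderings.2 ⟨List.nodup_ofFn.2 σ.injective, Finset.eq_univ_of_forall fun x => ?_⟩
  simpa [List.mem_ofFn] using σ.surjective x

theorem exists_perm_ofFn_eq {l : List (Fin d)} (hl : l ∈ orderings Finset.univ) :
    ∃ σ : Equiv.Perm (Fin d), List.ofFn σ = l := by
  obtain ⟨hnd, huniv⟩ := mem_orderings.1 hl
  have hmem : ∀ x, x ∈ l := fun x => List.mem_toFinset.1 (huniv ▸ Finset.mem_univ x)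
  have hlen : l.length = d := by
    rw [← List.toFinset_card_of_nodup hnd, huniv, Finset.card_univ, Fintype.card_fin]
  refine ⟨(finCongr hlen.symm).trans (hnd.getEquivOfForallMemList l hmem), ?_⟩
  exact List.ext_getElem (by simp [hlen]) fun k _ _ => by simp

theorem sum_perm_eq_sum_orderings_univ {M : Type*} [AddCommMonoid M] (G : List (Fin d) → M) :
    ∑ σ : Equiv.Perm (Fin d), G (List.ofFn σ) = ∑ l ∈ orderings Finset.univ, G l :=
  Finset.sum_bij (fun σ _ => List.ofFn σ) (fun σ _ => ofFn_perm_mem_orderings_univ σ)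
    (fun _ _ _ _ h => Equiv.ext (congrFun (List.ofFn_inj.1 h)))
    (fun _ hl => (exists_perm_ofFn_eq hl).imp fun _ h => ⟨Finset.mem_univ _, h⟩)
    fun _ _ => rfl

variable (v : Finset (Fin d) → ℝ)

theorem Lweight_eq_inv_prefixProd (σ : Equiv.Perm (Fin d)) :
    Lweight v σ = (prefixProd v (List.ofFn σ))⁻¹ := by
  simp only [Lweight, prefixProd, List.length_ofFn, permCoal_eq_toFinset_take_ofFn]

theorem marginal_ofFn (σ : Equiv.Perm (Fin d)) (i : Fin d) :
    marginal v i (List.ofFn σ) =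
      v (permCoal σ ((σ.symm i : ℕ) + 1)) - v (permCoal σ (σ.symm i)) := by
  simp only [marginal, idxOf_ofFn_perm, permCoal_eq_toFinset_take_ofFn]

theorem sum_Lweight : ∑ σ : Equiv.Perm (Fin d), Lweight v σ = (ratioPot v Finset.univ)⁻¹ := by
  simp only [Lweight_eq_inv_prefixProd]
  rw [sum_perm_eq_sum_orderings_univ fun l => (prefixProd v l)⁻¹, sum_orderings_inv_prefixProd]

theorem sum_Lweight_mul_marginal (hv0 : v ∅ = 0)
    (hv : ∀ A : Finset (Fin d), A.Nonempty → v A ≠ 0) (i : Fin d) :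
    ∑ σ : Equiv.Perm (Fin d), Lweight v σ * marginal v i (List.ofFn σ) =
      (ratioPot v (Finset.univ.erase i))⁻¹ := by
  simp only [Lweight_eq_inv_prefixProd]
  rw [sum_perm_eq_sum_orderings_univ fun l => (prefixProd v l)⁻¹ * marginal v i l,
    sum_orderings_inv_prefixProd_mul_marginal v hv0 hv (Finset.mem_univ i)]

end Permutations

end RandomOrder

open RandomOrder in
/-- for a positive cooperative game, the proportional values
`PV_i(D,v) = R(D,v)/R(D\{i},v)` are the random order model allocation associated with the
probability mass function `p(π) = L(π)/Σ_{σ∈S_D} L(σ)`. -/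
theorem pv_eq_random_order_model {d : ℕ} (v : Finset (Fin d) → ℝ) (hv0 : v ∅ = 0)
    (hpos : ∀ A : Finset (Fin d), A ≠ ∅ → 0 < v A) (i : Fin d) :
    ratioPot v Finset.univ / ratioPot v (Finset.univ.erase i) =
      ∑ σ : Equiv.Perm (Fin d),
        (Lweight v σ / ∑ τ : Equiv.Perm (Fin d), Lweight v τ) *
          (v (permCoal σ ((σ.symm i : ℕ) + 1)) - v (permCoal σ (σ.symm i))) := by
  have hv : ∀ A : Finset (Fin d), A.Nonempty → v A ≠ 0 := fun A hA => (hpos A hA.ne_empty).ne'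
  simp_rw [← marginal_ofFn, div_mul_eq_mul_div, ← Finset.sum_div]
  rw [sum_Lweight, sum_Lweight_mul_marginal v hv0 hv, inv_div_inv]
end

section
/- Let (D,v) be a cooperative game. For every player i ∈ D, the coalition-weighted Shapley formula equals the permutation-average formula: (1/d)·Σ_{A ⊆ D\{i}} C(d−1,|A|)^{-1}·(v(A∪{i}) − v(A)) = (1/d!)·Σ_{π∈S_D} (v(C_{π(i)}(π)) − v(C_{π(i)−1}(π))), where S_D is the set of permutations of D and C(d−1,|A|) is the binomial coefficient. -/
/-!
Group the permutations `σ` by the coalition `A` of players preceding `i`: on that group the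
marginal contribution of `i` is `v (A ∪ {i}) - v A`. A permutation lies in the group of `A`
exactly when it sends the first `|A|` positions onto `A`, position `|A|` to `i` and the
remaining positions onto the remaining players, so the group has `|A|! (d - 1 - |A|)!`
elements, and `|A|! (d - 1 - |A|)! / d! = 1 / (d * C(d - 1, |A|))`.
-/

open Finset

theorem Equiv.Perm.card_comp_eq_of_card_fiber_eq {α ι : Type*} [Fintype α] [DecidableEq α]
    [Fintype ι] [DecidableEq ι] (f g : α → ι)
    (h : ∀ c, Fintype.card {a // f a = c} = Fintype.card {a // g a = c}) :
    Fintype.card {σ : Equiv.Perm α // g ∘ σ = f} =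
      ∏ c, (Fintype.card {a // f a = c}).factorial := by
  set σ₀ := Equiv.ofFiberEquiv fun c => Fintype.equivOfCardEq (h c)
  have hσ₀ : g ∘ σ₀ = f := funext (Equiv.ofFiberEquiv_map _)
  -- `σ ↦ σ₀⁻¹ * σ` maps these permutations onto the stabilizer of `f`.
  rw [← DomMulAct.stabilizer_card f]
  refine Fintype.card_congr (Equiv.subtypeEquiv (Equiv.mulLeft σ₀⁻¹) fun σ => ?_)
  simp only [← hσ₀, Equiv.coe_mulLeft, Function.comp_assoc,
    ← Equiv.Perm.coe_mul, mul_inv_cancel_left]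

section Label

variable {α : Type*} [DecidableEq α]

/-- Where `y` stands relative to `i` in any ordering in which `A` is the set of players
preceding `i`. -/
def precedenceLabel (A : Finset α) (i y : α) : Ordering :=
  if y ∈ A then .lt else if y = i then .eq else .gt

theorem precedenceLabel_injective (i : α) : Function.Injective (precedenceLabel · i) := by
  intro A B h
  ext y
  have := congrFun h y
  simp only [precedenceLabel] at this
  split_ifs at this <;> simp_all

variable [Fintype α] {A : Finset α} {i : α}

theorem card_precedenceLabel_lt : Fintype.card {y // precedenceLabel A i y = .lt} = #A := by
  simp [Fintype.card_subtype, precedenceLabel]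

theorem card_precedenceLabel_eq (hi : i ∉ A) :
    Fintype.card {y // precedenceLabel A i y = .eq} = 1 := by
  rw [Fintype.card_subtype, card_eq_one]
  refine ⟨i, ?_⟩
  ext y
  simp only [precedenceLabel]
  by_cases hy : y = i <;> simp [hy, hi]

theorem card_precedenceLabel_gt (hi : i ∉ A) :
    Fintype.card {y // precedenceLabel A i y = .gt} = Fintype.card α - 1 - #A := by
  rw [Fintype.card_subtype, Nat.sub_sub, add_comm, ← card_insert_of_notMem hi, ← card_compl]
  congr 1
  ext y
  simp [precedenceLabel]
  tauto

end Label

section Compare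

variable {d : ℕ} (j : Fin d)

theorem card_compare_lt : Fintype.card {p : Fin d // compare p j = .lt} = j := by
  simp only [Fintype.card_subtype, compare_lt_iff_lt, filter_gt_eq_Iio, Fin.card_Iio]

theorem card_compare_eq : Fintype.card {p : Fin d // compare p j = .eq} = 1 := by
  simp

theorem card_compare_gt : Fintype.card {p : Fin d // compare p j = .gt} = d - 1 - j := by
  simp only [Fintype.card_subtype, compare_gt_iff_gt, filter_lt_eq_Ioi, Fin.card_Ioi]

end Compare

theorem one_div_mul_inv_choose {n k : ℕ} (hn : n ≠ 0) (hk : k ≤ n - 1) :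
    (1 / n : ℝ) * ((n - 1).choose k : ℝ)⁻¹ =
      1 / n.factorial * ((k.factorial * (n - 1 - k).factorial : ℕ) : ℝ) := by
  rw [Nat.cast_choose ℝ hk, ← Nat.mul_factorial_pred hn]
  push_cast
  field_simp

section Coalitions

variable {d : ℕ} (σ : Equiv.Perm (Fin d))

theorem mem_permCoal {j : ℕ} {y : Fin d} : y ∈ permCoal σ j ↔ (σ.symm y : ℕ) < j := by
  rw [permCoal, ← σ.coe_toEmbedding, ← map_eq_image, mem_map_equiv, mem_filter_univ]

theorem card_permCoal (a : Fin d) : #(permCoal σ a) = a := by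
  simp only [permCoal, card_image_of_injective _ σ.injective, Fin.val_fin_lt, filter_gt_eq_Iio,
    Fin.card_Iio]

theorem permCoal_symm_apply_succ (i : Fin d) :
    permCoal σ (σ.symm i + 1) = insert i (permCoal σ (σ.symm i)) := by
  ext y
  rw [mem_insert, mem_permCoal, mem_permCoal, Nat.lt_succ_iff_lt_or_eq, Fin.val_inj,
    σ.symm.injective.eq_iff, or_comm]

theorem permCoal_symm_apply_subset_erase (i : Fin d) :
    permCoal σ (σ.symm i) ⊆ univ.erase i :=
  subset_erase.2 ⟨subset_univ _, by simp [mem_permCoal]⟩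

theorem precedenceLabel_permCoal_symm_apply (i : Fin d) :
    precedenceLabel (permCoal σ (σ.symm i)) i = fun y => compare (σ.symm y) (σ.symm i) := by
  funext y
  simp only [precedenceLabel, mem_permCoal, Fin.val_fin_lt]
  split_ifs with hlt heq
  · exact (compare_lt_iff_lt.2 hlt).symm
  · rw [heq, compare_eq_iff_eq.2 rfl]
  · exact (compare_gt_iff_gt.2 ((not_lt.1 hlt).lt_of_ne (σ.symm.injective.ne heq).symm)).symm

theorem permCoal_symm_apply_eq_iff {i : Fin d} {A : Finset (Fin d)} (hi : i ∉ A) {j : Fin d}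
    (hj : #A = j) :
    permCoal σ (σ.symm i) = A ↔ (compare · j) ∘ σ.symm = precedenceLabel A i := by
  constructor
  · rintro rfl
    have hij : σ.symm i = j := Fin.ext (hj ▸ (card_permCoal σ _).symm)
    rw [precedenceLabel_permCoal_symm_apply, hij]
    rfl
  · intro h
    have hij : σ.symm i = j :=
      compare_eq_iff_eq.1 ((congrFun h i).trans (by simp [precedenceLabel, hi]))
    apply precedenceLabel_injective i
    dsimp only
    rw [precedenceLabel_permCoal_symm_apply, hij]
    exact h

end Coalitions

theorem card_filter_permCoal_symm_apply_eq {d : ℕ} {i : Fin d} {A : Finset (Fin d)}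
    (hA : A ⊆ univ.erase i) :
    #{σ : Equiv.Perm (Fin d) | permCoal σ (σ.symm i) = A} =
      (#A).factorial * (d - 1 - #A).factorial := by
  have hi : i ∉ A := (subset_erase.1 hA).2
  have hAd : #A < d :=
    (by simpa using card_le_card hA : #A ≤ d - 1).trans_lt (Nat.sub_lt i.pos one_pos)
  set j : Fin d := ⟨#A, hAd⟩
  rw [← Fintype.card_subtype]
  calc Fintype.card {σ : Equiv.Perm (Fin d) // permCoal σ (σ.symm i) = A}
      = Fintype.card {τ : Equiv.Perm (Fin d) // (compare · j) ∘ τ = precedenceLabel A i} :=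
        Fintype.card_congr <| Equiv.subtypeEquiv (Equiv.inv _) fun σ =>
          permCoal_symm_apply_eq_iff σ hi rfl
    _ = ∏ c, (Fintype.card {y // precedenceLabel A i y = c}).factorial := by
        refine Equiv.Perm.card_comp_eq_of_card_fiber_eq _ _ fun c => ?_
        cases c
        · rw [card_precedenceLabel_lt, card_compare_lt]
        · rw [card_precedenceLabel_eq hi, card_compare_eq]
        · rw [card_precedenceLabel_gt hi, card_compare_gt, Fintype.card_fin]
    _ = (#A).factorial * (d - 1 - #A).factorial := by
        rw [show (univ : Finset Ordering) = {.lt, .eq, .gt} by decide]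
        simp [card_precedenceLabel_lt, card_precedenceLabel_eq hi, card_precedenceLabel_gt hi]

theorem shapley_coalition_eq_permutation_general {d : ℕ} (v : Finset (Fin d) → ℝ)
    (i : Fin d) :
    (1 / d : ℝ) * ∑ A ∈ (Finset.univ.erase i).powerset,
        (((d - 1).choose A.card : ℝ))⁻¹ * (v (insert i A) - v A) =
      (1 / (d.factorial : ℝ)) * ∑ σ : Equiv.Perm (Fin d),
        (v (permCoal σ ((σ.symm i : ℕ) + 1)) - v (permCoal σ (σ.symm i))) := by
  rw [← sum_fiberwise_of_maps_to (g := fun σ => permCoal σ (σ.symm i))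
    fun σ _ => mem_powerset.2 (permCoal_symm_apply_subset_erase σ i), mul_sum, mul_sum]
  refine sum_congr rfl fun A hA => ?_
  have hA : A ⊆ univ.erase i := mem_powerset.1 hA
  have hAd : #A ≤ d - 1 := by simpa using card_le_card hA
  rw [sum_congr rfl fun σ hσ => by rw [permCoal_symm_apply_succ, (mem_filter.1 hσ).2],
    sum_const, card_filter_permCoal_symm_apply_eq hA, nsmul_eq_mul, ← mul_assoc, ← mul_assoc,
    one_div_mul_inv_choose i.pos.ne' hAd]

/-- the coalition-weighted Shapley formula equals the permutation-average
formula. -/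
theorem shapley_coalition_eq_permutation {d : ℕ} (v : Finset (Fin d) → ℝ) (hv0 : v ∅ = 0)
    (i : Fin d) :
    (1 / d : ℝ) * ∑ A ∈ (Finset.univ.erase i).powerset,
        (((d - 1).choose A.card : ℝ))⁻¹ * (v (insert i A) - v A) =
      (1 / (d.factorial : ℝ)) * ∑ σ : Equiv.Perm (Fin d),
        (v (permCoal σ ((σ.symm i : ℕ) + 1)) - v (permCoal σ (σ.symm i))) :=
  shapley_coalition_eq_permutation_general v i
end

section
/- Let (D,v) be a cooperative game. The Shapley values of its subgames satisfy the balanced contributions property: for every A ⊆ D and all distinct i, j ∈ A, Shap_i(A,v) − Shap_i(A\{j},v) = Shap_j(A,v) − Shap_j(A\{i},v). -/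
open Finset

/-- The Shapley value of player `i` in the subgame of `(D, v)` on the coalition `A`:
`Shap_i(A,v) = (1/|A|)·Σ_{B ⊆ A\{i}} C(|A|−1,|B|)⁻¹·(v(B∪{i}) − v(B))`. -/
noncomputable def shapleySub {d : ℕ} (v : Finset (Fin d) → ℝ) (A : Finset (Fin d))
    (i : Fin d) : ℝ :=
  (1 / A.card : ℝ) * ∑ B ∈ (A.erase i).powerset,
    (((A.card - 1).choose B.card : ℝ))⁻¹ * (v (insert i B) - v B)

/-! The Shapley value is a difference of Hart–Mas-Colell potentials,
`Shap_i(A,v) = P(A) − P(A\{i})` with `P(A) = Σ_{∅ ≠ B ⊆ A} (|B|−1)!(|A|−|B|)!/|A|! · v(B)`,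
so both sides of the balanced contributions identity equal `P(A) − P(A\{i}) − P(A\{j}) + P(A\{i,j})`.
The potential ignores `v ∅`; the Shapley value does too, so one may assume `v ∅ = 0`. -/

/-- The weight `(k−1)!(n−k)!/n!` of a coalition of size `k` in the potential of one of size `n`;
the junk value `0⁻¹ = 0` makes it vanish at `k = 0`. -/
noncomputable def potentialCoeff (n k : ℕ) : ℝ :=
  ((k * n.choose k : ℕ) : ℝ)⁻¹

noncomputable def potential {d : ℕ} (v : Finset (Fin d) → ℝ) (A : Finset (Fin d)) : ℝ :=
  ∑ B ∈ A.powerset, potentialCoeff A.card B.card * v B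

lemma potentialCoeff_zero_right (n : ℕ) : potentialCoeff n 0 = 0 := by
  simp [potentialCoeff]

lemma potentialCoeff_succ_succ (n k : ℕ) :
    potentialCoeff (n + 1) (k + 1) = ((n + 1 : ℕ) : ℝ)⁻¹ * ((n.choose k : ℕ) : ℝ)⁻¹ := by
  rw [potentialCoeff, ← mul_inv, ← Nat.cast_mul, mul_comm (k + 1), ← Nat.add_one_mul_choose_eq]

lemma potentialCoeff_succ_add_potentialCoeff_succ_succ {n k : ℕ} (hk : 0 < k) (hkn : k ≤ n) :
    potentialCoeff (n + 1) k + potentialCoeff (n + 1) (k + 1) = potentialCoeff n k := by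
  have hc : (0 : ℝ) < n.choose k := by exact_mod_cast Nat.choose_pos hkn
  have hc' : (0 : ℝ) < (n + 1).choose k := by exact_mod_cast Nat.choose_pos (by omega)
  have hk' : (0 : ℝ) < k := by exact_mod_cast hk
  have hchoose_succ : (n.choose k : ℝ) * (n + 1) = (n + 1).choose k * (n + 1 - k) := by
    have := Nat.choose_mul_succ_eq n k
    rw [← Nat.cast_inj (R := ℝ)] at this
    push_cast [Nat.cast_sub (by omega : k ≤ n + 1)] at this
    exact this
  rw [potentialCoeff, potentialCoeff, mul_comm (k + 1), ← Nat.add_one_mul_choose_eq,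
    potentialCoeff]
  push_cast
  field_simp
  linear_combination hchoose_succ

lemma shapleySub_insert_eq_potential_sub {d : ℕ} {v : Finset (Fin d) → ℝ} (hv0 : v ∅ = 0)
    {S : Finset (Fin d)} {i : Fin d} (hi : i ∉ S) :
    shapleySub v (insert i S) i = potential v (insert i S) - potential v S := by
  rw [shapleySub, potential, potential, card_insert_of_notMem hi, sum_powerset_insert hi,
    erase_insert hi, Nat.add_sub_cancel, mul_sum, add_sub_right_comm, ← sum_sub_distrib,
    ← sum_add_distrib]
  refine sum_congr rfl fun B hB => ?_
  have hBS : B ⊆ S := mem_powerset.1 hB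
  rw [card_insert_of_notMem (fun h => hi (hBS h)), potentialCoeff_succ_succ]
  rcases B.eq_empty_or_nonempty with rfl | hB
  · simp [hv0, potentialCoeff_zero_right]
  · have hcoeff := potentialCoeff_succ_add_potentialCoeff_succ_succ hB.card_pos (card_le_card hBS)
    rw [potentialCoeff_succ_succ] at hcoeff
    linear_combination (-v B) * hcoeff

lemma shapleySub_eq_potential_sub {d : ℕ} {v : Finset (Fin d) → ℝ} (hv0 : v ∅ = 0)
    {A : Finset (Fin d)} {i : Fin d} (hi : i ∈ A) :
    shapleySub v A i = potential v A - potential v (A.erase i) := by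
  conv_lhs => rw [← insert_erase hi]
  rw [shapleySub_insert_eq_potential_sub hv0 (notMem_erase i A), insert_erase hi]

lemma shapleySub_sub_const {d : ℕ} (v : Finset (Fin d) → ℝ) (c : ℝ) (A : Finset (Fin d))
    (i : Fin d) : shapleySub (fun B => v B - c) A i = shapleySub v A i := by
  simp only [shapleySub, sub_sub_sub_cancel_right]

theorem shapley_balanced_contributions_general {d : ℕ} (v : Finset (Fin d) → ℝ)
    (A : Finset (Fin d)) (i j : Fin d) (hi : i ∈ A) (hj : j ∈ A) (hij : i ≠ j) :
    shapleySub v A i - shapleySub v (A.erase j) i =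
      shapleySub v A j - shapleySub v (A.erase i) j := by
  have hw : (fun B => v B - v ∅) ∅ = 0 := sub_self _
  simp only [← shapleySub_sub_const v (v ∅)]
  rw [shapleySub_eq_potential_sub hw hi, shapleySub_eq_potential_sub hw hj,
    shapleySub_eq_potential_sub hw (mem_erase.2 ⟨hij, hi⟩),
    shapleySub_eq_potential_sub hw (mem_erase.2 ⟨hij.symm, hj⟩), erase_right_comm]
  ring

/-- the Shapley values of the subgames of a cooperative game `(D, v)` satisfy
the balanced contributions property. -/
theorem shapley_balanced_contributions {d : ℕ} (v : Finset (Fin d) → ℝ) (hv0 : v ∅ = 0)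
    (A : Finset (Fin d)) (i j : Fin d) (hi : i ∈ A) (hj : j ∈ A) (hij : i ≠ j) :
    shapleySub v A i - shapleySub v (A.erase j) i =
      shapleySub v A j - shapleySub v (A.erase i) j :=
  shapley_balanced_contributions_general v A i j hi hj hij
end

section
/- Let ρ ∈ (−1,1), let Z₁, Z₂ be independent standard Gaussian random variables on a probability space (Ω,ℱ,ℙ), and set X₁ = Z₁, X₂ = ρZ₁ + √(1−ρ²)Z₂ (so that (X₁,X₂) is a centered Gaussian vector with unit variances and correlation ρ), and Y = X₁. Then the Shapley effects of this model are Sh₁ = 1 − ρ²/2 and Sh₂ = ρ²/2. -/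
open MeasureTheory ProbabilityTheory

/-- `σ(X_A)`: the σ-algebra generated by the random variables `(X_i)_{i ∈ A}`
(for `A = ∅` this is the trivial σ-algebra `⊥`, so that `S^clos_∅ = 0`). -/
noncomputable def sigmaGen {Ω : Type*} {d : ℕ} (X : Fin d → Ω → ℝ) (A : Finset (Fin d)) :
    MeasurableSpace Ω :=
  ⨆ i ∈ A, MeasurableSpace.comap (X i) inferInstance

/-- `S^clos_A = Var(E[Y | σ(X_A)])/Var(Y)`: the closed Sobol' index of the coalition `A`. -/
noncomputable def closedSobol {Ω : Type*} [mΩ : MeasurableSpace Ω] (μ : Measure Ω) {d : ℕ}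
    (X : Fin d → Ω → ℝ) (Y : Ω → ℝ) (A : Finset (Fin d)) : ℝ :=
  variance (μ[Y|sigmaGen X A]) μ / variance Y μ

/-- The Shapley effect of the input `i`:
`Sh_i = Σ_{A ⊆ D\{i}} (|A|!·(d−|A|−1)!/d!)·(S^clos_{A∪{i}} − S^clos_A)`. -/
noncomputable def shapleyEffect {Ω : Type*} [mΩ : MeasurableSpace Ω] (μ : Measure Ω) {d : ℕ}
    (X : Fin d → Ω → ℝ) (Y : Ω → ℝ) (i : Fin d) : ℝ :=
  ∑ A ∈ (Finset.univ.erase i).powerset,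
    (((A.card.factorial * (d - A.card - 1).factorial : ℕ) : ℝ) / (d.factorial : ℝ)) *
      (closedSobol μ X Y (insert i A) - closedSobol μ X Y A)


/-! Since `Y = X 0`, every coalition containing `0` has closed Sobol' index `1`, while the empty
coalition has index `0`. For the coalition `{1}`, write
`Y = ρ X 1 + c U` with `c = √(1 - ρ²)` and `U = c Z₁ - ρ Z₂`: the pair `(U, X 1)` is a linear image
of the standard Gaussian vector `(Z₁, Z₂)` with zero covariance, hence independent, so
`E[Y | X 1] = ρ X 1` and the index is `ρ²`. With two inputs, each Shapley effect is the average of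
the marginal contributions over the two orderings. -/

section SigmaGen

variable {Ω : Type*} {d : ℕ} {X : Fin d → Ω → ℝ}

lemma sigmaGen_empty : sigmaGen X ∅ = ⊥ := by
  simp [sigmaGen]

lemma sigmaGen_singleton (i : Fin d) :
    sigmaGen X {i} = MeasurableSpace.comap (X i) inferInstance := by
  simp [sigmaGen]

lemma sigmaGen_le {mΩ : MeasurableSpace Ω} (hX : ∀ i, Measurable (X i)) (A : Finset (Fin d)) :
    sigmaGen X A ≤ mΩ :=
  iSup₂_le fun i _ ↦ (hX i).comap_le

lemma stronglyMeasurable_sigmaGen {A : Finset (Fin d)} {i : Fin d} (hi : i ∈ A) :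
    StronglyMeasurable[sigmaGen X A] (X i) :=
  (comap_measurable (X i)).stronglyMeasurable.mono
    (le_iSup₂ (f := fun j (_ : j ∈ A) ↦ MeasurableSpace.comap (X j) inferInstance) i hi)

end SigmaGen

section ClosedSobol

variable {Ω : Type*} {mΩ : MeasurableSpace Ω} {μ : Measure Ω} {d : ℕ}
  {X : Fin d → Ω → ℝ} {Y : Ω → ℝ}

lemma closedSobol_empty [IsProbabilityMeasure μ] : closedSobol μ X Y ∅ = 0 := by
  simp [closedSobol, sigmaGen_empty, condExp_bot, variance_eq_integral aemeasurable_const]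

lemma closedSobol_eq_one [IsFiniteMeasure μ] (hX : ∀ i, Measurable (X i)) {A : Finset (Fin d)}
    (hYA : StronglyMeasurable[sigmaGen X A] Y) (hY : Integrable Y μ) (hvar : Var[Y; μ] ≠ 0) :
    closedSobol μ X Y A = 1 := by
  rw [closedSobol, condExp_of_stronglyMeasurable (sigmaGen_le hX A) hYA hY, div_self hvar]

lemma condExp_comap_const_mul_add_of_indepFun [IsFiniteMeasure μ] {V W : Ω → ℝ}
    (hV : Measurable V) (hW : Measurable W) (hVi : Integrable V μ) (hWi : Integrable W μ)
    (hind : W ⟂ᵢ[μ] V) (a : ℝ) :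
    μ[fun ω ↦ a * V ω + W ω | MeasurableSpace.comap V inferInstance]
      =ᵐ[μ] fun ω ↦ a * V ω + μ[W] := by
  have hVV : StronglyMeasurable[MeasurableSpace.comap V inferInstance] (fun ω ↦ a * V ω) :=
    ((comap_measurable V).const_mul a).stronglyMeasurable
  have hWV := condExp_indep_eq hW.comap_le hV.comap_le (comap_measurable W).stronglyMeasurable
    ((IndepFun_iff_Indep W V μ).mp hind)
  rw [show (fun ω ↦ a * V ω + W ω) = (fun ω ↦ a * V ω) + W from rfl]
  filter_upwards [condExp_add (hVi.const_mul a) hWi (MeasurableSpace.comap V inferInstance), hWV]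
    with ω hadd hω
  rw [hadd, Pi.add_apply, condExp_of_stronglyMeasurable hV.comap_le hVV (hVi.const_mul a), hω]

lemma closedSobol_singleton_of_indepFun [IsProbabilityMeasure μ] (hX : ∀ i, Measurable (X i))
    {i : Fin d} {W : Ω → ℝ} (hW : Measurable W) (hXi : Integrable (X i) μ)
    (hWi : Integrable W μ) (hind : W ⟂ᵢ[μ] X i) {a : ℝ} (hY : Y = fun ω ↦ a * X i ω + W ω) :
    closedSobol μ X Y {i} = a ^ 2 * Var[X i; μ] / Var[Y; μ] := by
  rw [closedSobol, sigmaGen_singleton, hY,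
    variance_congr (condExp_comap_const_mul_add_of_indepFun (hX i) hW hXi hWi hind a),
    variance_add_const ((hX i).const_mul a).aestronglyMeasurable, variance_const_mul]

end ClosedSobol

section Shapley

variable {Ω : Type*} {mΩ : MeasurableSpace Ω} (μ : Measure Ω) (X : Fin 2 → Ω → ℝ) (Y : Ω → ℝ)

lemma shapleyEffect_fin_two_zero :
    shapleyEffect μ X Y 0 = (closedSobol μ X Y {0} - closedSobol μ X Y ∅
      + (closedSobol μ X Y Finset.univ - closedSobol μ X Y {1})) / 2 := by
  rw [shapleyEffect, show (Finset.univ.erase (0 : Fin 2)).powerset = {∅, {1}} by decide,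
    Finset.sum_pair (by decide),
    show insert (0 : Fin 2) {1} = (Finset.univ : Finset (Fin 2)) by decide]
  simp [Nat.factorial, add_div, inv_mul_eq_div]

lemma shapleyEffect_fin_two_one :
    shapleyEffect μ X Y 1 = (closedSobol μ X Y {1} - closedSobol μ X Y ∅
      + (closedSobol μ X Y Finset.univ - closedSobol μ X Y {0})) / 2 := by
  rw [shapleyEffect, show (Finset.univ.erase (1 : Fin 2)).powerset = {∅, {0}} by decide,
    Finset.sum_pair (by decide),
    show insert (1 : Fin 2) {0} = (Finset.univ : Finset (Fin 2)) by decide]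
  simp [Nat.factorial, add_div, inv_mul_eq_div]

end Shapley

namespace ProbabilityTheory

variable {Ω : Type*} {mΩ : MeasurableSpace Ω} {μ : Measure Ω} {Z₁ Z₂ : Ω → ℝ}

lemma IndepFun.variance_const_mul_add_const_mul (hZ : Z₁ ⟂ᵢ[μ] Z₂) (h₁ : MemLp Z₁ 2 μ)
    (h₂ : MemLp Z₂ 2 μ) (a b : ℝ) :
    Var[fun ω ↦ a * Z₁ ω + b * Z₂ ω; μ] = a ^ 2 * Var[Z₁; μ] + b ^ 2 * Var[Z₂; μ] := by
  rw [show (fun ω ↦ a * Z₁ ω + b * Z₂ ω) = (fun ω ↦ a * Z₁ ω) + (fun ω ↦ b * Z₂ ω) from rfl,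
    (hZ.comp (measurable_const_mul a) (measurable_const_mul b)).variance_add
      (h₁.const_mul a) (h₂.const_mul b),
    variance_const_mul, variance_const_mul]

lemma IndepFun.rotate_of_hasLaw_gaussianReal {m : ℝ} {v : NNReal}
    (h₁ : HasLaw Z₁ (gaussianReal m v) μ) (h₂ : HasLaw Z₂ (gaussianReal m v) μ)
    (hZ : Z₁ ⟂ᵢ[μ] Z₂) (c s : ℝ) :
    (fun ω ↦ c * Z₁ ω - s * Z₂ ω) ⟂ᵢ[μ] (fun ω ↦ s * Z₁ ω + c * Z₂ ω) := by
  let L : ℝ × ℝ →L[ℝ] ℝ × ℝ :=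
    (c • ContinuousLinearMap.fst ℝ ℝ ℝ - s • ContinuousLinearMap.snd ℝ ℝ ℝ).prod
      (s • ContinuousLinearMap.fst ℝ ℝ ℝ + c • ContinuousLinearMap.snd ℝ ℝ ℝ)
  have hG : HasGaussianLaw (fun ω ↦ (c * Z₁ ω - s * Z₂ ω, s * Z₁ ω + c * Z₂ ω)) μ := by
    simpa [L] using (hZ.hasGaussianLaw h₁.hasGaussianLaw h₂.hasGaussianLaw).map_fun L
  refine hG.indepFun_of_covariance_eq_zero ?_
  have hL₁ : MemLp Z₁ 2 μ := h₁.hasGaussianLaw.memLp_two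
  have hL₂ : MemLp Z₂ 2 μ := h₂.hasGaussianLaw.memLp_two
  have := h₁.hasGaussianLaw.isProbabilityMeasure
  have hvar : Var[Z₁; μ] = Var[Z₂; μ] := by rw [h₁.variance_eq, h₂.variance_eq]
  rw [covariance_fun_sub_left (hL₁.const_mul c) (hL₂.const_mul s),
    show (fun ω ↦ s * Z₁ ω + c * Z₂ ω) = (fun ω ↦ s * Z₁ ω) + (fun ω ↦ c * Z₂ ω) from rfl,
    covariance_add_right (hL₁.const_mul c) (hL₁.const_mul s) (hL₂.const_mul c),
    covariance_add_right (hL₂.const_mul s) (hL₁.const_mul s) (hL₂.const_mul c)]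
  · simp only [covariance_const_mul_left, covariance_const_mul_right,
      covariance_self hL₁.aemeasurable, covariance_self hL₂.aemeasurable,
      hZ.covariance_eq_zero hL₁ hL₂, hZ.symm.covariance_eq_zero hL₂ hL₁, hvar]
    ring
  · exact (hL₁.const_mul s).add (hL₂.const_mul c)

end ProbabilityTheory

/-- for `(X₁, X₂)` a centered Gaussian vector with unit variances and
correlation `ρ` (built from independent standard Gaussians `Z₁, Z₂`) and the model
`Y = X₁`, the Shapley effects are `Sh₁ = 1 − ρ²/2` and `Sh₂ = ρ²/2`. -/
theorem shapley_joke {Ω : Type*} {mΩ : MeasurableSpace Ω} (μ : Measure Ω)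
    [IsProbabilityMeasure μ] (ρ : ℝ) (hρ₁ : -1 < ρ) (hρ₂ : ρ < 1)
    (Z₁ Z₂ : Ω → ℝ) (hZ₁ : Measurable Z₁) (hZ₂ : Measurable Z₂)
    (hindep : IndepFun Z₁ Z₂ μ)
    (hlaw₁ : μ.map Z₁ = gaussianReal 0 1) (hlaw₂ : μ.map Z₂ = gaussianReal 0 1)
    (X : Fin 2 → Ω → ℝ) (hX₁ : X 0 = Z₁)
    (hX₂ : X 1 = fun ω => ρ * Z₁ ω + Real.sqrt (1 - ρ ^ 2) * Z₂ ω)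
    (Y : Ω → ℝ) (hY : Y = X 0) :
    shapleyEffect μ X Y 0 = 1 - ρ ^ 2 / 2 ∧ shapleyEffect μ X Y 1 = ρ ^ 2 / 2 := by
  set c := Real.sqrt (1 - ρ ^ 2)
  have hc : c ^ 2 = 1 - ρ ^ 2 := Real.sq_sqrt (by nlinarith)
  have h₁ : HasLaw Z₁ (gaussianReal 0 1) μ := ⟨hZ₁.aemeasurable, hlaw₁⟩
  have h₂ : HasLaw Z₂ (gaussianReal 0 1) μ := ⟨hZ₂.aemeasurable, hlaw₂⟩
  have hL₁ : MemLp Z₁ 2 μ := h₁.hasGaussianLaw.memLp_two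
  have hL₂ : MemLp Z₂ 2 μ := h₂.hasGaussianLaw.memLp_two
  have hvar {Z : Ω → ℝ} (h : HasLaw Z (gaussianReal 0 1) μ) : Var[Z; μ] = 1 := by
    rw [h.variance_eq, variance_id_gaussianReal]; rfl
  have hX : ∀ i, Measurable (X i) := Fin.forall_fin_two.mpr ⟨hX₁ ▸ hZ₁, hX₂ ▸ by fun_prop⟩
  have hvarY : Var[Y; μ] = 1 := by rw [hY, hX₁, hvar h₁]
  have hS_of_mem (A : Finset (Fin 2)) (hA : 0 ∈ A) : closedSobol μ X Y A = 1 :=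
    closedSobol_eq_one hX (hY ▸ stronglyMeasurable_sigmaGen hA)
      (hY ▸ hX₁ ▸ hL₁.integrable one_le_two) (by simp [hvarY])
  have hS₁ : closedSobol μ X Y {1} = ρ ^ 2 := by
    have hYdecomp : Y = fun ω ↦ ρ * X 1 ω + c * (c * Z₁ ω - ρ * Z₂ ω) := by
      funext ω; rw [hY, hX₁, hX₂]; linear_combination (-Z₁ ω) * hc
    have hind : (fun ω ↦ c * (c * Z₁ ω - ρ * Z₂ ω)) ⟂ᵢ[μ] X 1 := hX₂ ▸
      (hindep.rotate_of_hasLaw_gaussianReal h₁ h₂ c ρ).comp (measurable_const_mul c) measurable_id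
    have hX₁i : Integrable (X 1) μ :=
      hX₂ ▸ ((hL₁.const_mul ρ).add (hL₂.const_mul c)).integrable one_le_two
    have hUi : Integrable (fun ω ↦ c * (c * Z₁ ω - ρ * Z₂ ω)) μ :=
      (((hL₁.const_mul c).sub (hL₂.const_mul ρ)).const_mul c).integrable one_le_two
    rw [closedSobol_singleton_of_indepFun hX (by fun_prop) hX₁i hUi hind hYdecomp, hvarY, hX₂,
      hindep.variance_const_mul_add_const_mul hL₁ hL₂, hvar h₁, hvar h₂, hc]
    ring
  rw [shapleyEffect_fin_two_zero, shapleyEffect_fin_two_one, closedSobol_empty,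
    hS_of_mem {0} (by decide), hS_of_mem Finset.univ (by decide), hS₁]
  constructor <;> ring
end
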